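/- Let Λ be a commutative Noetherian ring, I an ideal, and M a finitely generated Λ-module with cl(Ann_Λ M) ⊇ Iⁿ. Then the I-adic completion M̂ = lim← M/MIⁱ and the localization M^ℓ = M[(1+I)⁻¹] are both isomorphic to M/MIⁿ. -/

import Mathlib

/-!
Since `Ann M` kills `M`, the hypothesis gives `Iⁿ M ⊆ (Ann M + Iᵐ) M = Iᵐ M` for every `m`, so the
`I`-adic filtration of `M` is constant from step `n` on. Hence the inverse system `M/IᵐM` is
eventually constant and `M̂ = M/IⁿM`. For the localization, `IⁿM = I · IⁿM` is finitely generated,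
so by Nakayama some `1 + a` with `a ∈ I` kills `IⁿM`, while every `1 + a` acts invertibly on
`M/IⁿM`, on which `a` is nilpotent; so `M → M/IⁿM` is the localization at `1 + I`.
-/

/-- The multiplicative set `1 + I` in a commutative ring. -/
def onePlus {Λ : Type*} [CommRing Λ] (I : Ideal Λ) : Submonoid Λ where
  carrier := {x | ∃ a ∈ I, x = 1 + a}
  one_mem' := ⟨0, I.zero_mem, by ring⟩
  mul_mem' := by
    rintro x y ⟨a, ha, rfl⟩ ⟨b, hb, rfl⟩
    exact ⟨a + b + a * b, I.add_mem (I.add_mem ha hb) (I.mul_mem_left a hb), by ring⟩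

def Ideal.adicClosure {Λ : Type*} [CommRing Λ] (I 𝔞 : Ideal Λ) : Ideal Λ :=
  ⨅ m : ℕ, 𝔞 ⊔ I ^ m

section
variable {Λ : Type*} [CommRing Λ] {I : Ideal Λ} {M : Type*} [AddCommGroup M] [Module Λ M]
  {N : Submodule Λ M}

lemma Submodule.smul_top_le_of_le_annihilator_sup {J K : Ideal Λ}
    (h : J ≤ (⊤ : Submodule Λ M).annihilator ⊔ K) : J • (⊤ : Submodule Λ M) ≤ K • ⊤ :=
  calc J • (⊤ : Submodule Λ M) ≤ ((⊤ : Submodule Λ M).annihilator ⊔ K) • ⊤ :=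
        Submodule.smul_mono_left h
    _ = K • ⊤ := by rw [Submodule.sup_smul, Submodule.annihilator_smul, bot_sup_eq]

lemma Ideal.pow_smul_top_eq_of_pow_le_adicClosure {n m : ℕ}
    (hcl : I ^ n ≤ I.adicClosure (⊤ : Submodule Λ M).annihilator) (hm : n ≤ m) :
    I ^ m • (⊤ : Submodule Λ M) = I ^ n • ⊤ :=
  le_antisymm (Submodule.smul_mono_left (Ideal.pow_le_pow_right hm))
    (Submodule.smul_top_le_of_le_annihilator_sup (hcl.trans (iInf_le _ m)))

lemma Submodule.factor_injective {p q : Submodule Λ M} (hpq : p ≤ q) (hqp : q ≤ p) :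
    Function.Injective (Submodule.factor hpq) := by
  intro x y hxy
  induction x using Submodule.Quotient.induction_on
  induction y using Submodule.Quotient.induction_on
  change Submodule.Quotient.mk _ = Submodule.Quotient.mk _ at hxy
  rw [Submodule.Quotient.eq] at hxy
  exact (Submodule.Quotient.eq p).2 (hqp hxy)

lemma AdicCompletion.eval_bijective_of_pow_smul_top_eq {n : ℕ}
    (hstab : ∀ m, n ≤ m → I ^ m • (⊤ : Submodule Λ M) = I ^ n • ⊤) :
    Function.Bijective (AdicCompletion.eval I M n) := by
  refine ⟨fun x y hxy ↦ AdicCompletion.ext fun m ↦ ?_, AdicCompletion.eval_surjective I M n⟩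
  rcases le_total m n with hm | hm
  · rw [← transitionMap_comp_eval_apply I M hm x, ← transitionMap_comp_eval_apply I M hm y]
    exact congrArg _ hxy
  · refine Submodule.factor_injective (hstab m hm).le (hstab m hm).ge ?_
    rwa [eval_apply, eval_apply, ← transitionMap_comp_eval_apply I M hm x,
      ← transitionMap_comp_eval_apply I M hm y] at hxy

lemma isUnit_algebraMap_end_quotient_of_mem_onePlus {n : ℕ}
    (hpow : I ^ n • (⊤ : Submodule Λ M) ≤ N) {s : Λ} (hs : s ∈ onePlus I) :
    IsUnit (algebraMap Λ (Module.End Λ (M ⧸ N)) s) := by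
  obtain ⟨a, ha, rfl⟩ := hs
  have hnil : IsNilpotent (algebraMap Λ (Module.End Λ (M ⧸ N)) a) := by
    refine ⟨n, LinearMap.ext fun x ↦ ?_⟩
    induction x using Submodule.Quotient.induction_on with | H y
    rw [← map_pow, Module.algebraMap_end_apply, ← Submodule.Quotient.mk_smul,
      LinearMap.zero_apply, Submodule.Quotient.mk_eq_zero]
    exact hpow (Submodule.smul_mem_smul (Ideal.pow_mem_pow ha n) Submodule.mem_top)
  rw [map_add, map_one]
  exact hnil.isUnit_one_add

lemma exists_mem_onePlus_smul_eq_zero_of_fg (hfg : N.FG) (hN : N ≤ I • N) :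
    ∃ r ∈ onePlus I, ∀ x ∈ N, r • x = 0 := by
  obtain ⟨r, hr, hrN⟩ := Submodule.exists_sub_one_mem_and_smul_eq_zero_of_fg_of_le_smul I N hfg hN
  exact ⟨r, ⟨r - 1, hr, by ring⟩, hrN⟩

lemma isLocalizedModule_onePlus_mkQ {n : ℕ} (hfg : N.FG) (hN : N ≤ I • N)
    (hpow : I ^ n • (⊤ : Submodule Λ M) ≤ N) : IsLocalizedModule (onePlus I) N.mkQ where
  map_units s := isUnit_algebraMap_end_quotient_of_mem_onePlus hpow s.2
  surj y := by
    obtain ⟨x, rfl⟩ := N.mkQ_surjective y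
    exact ⟨(x, 1), one_smul _ _⟩
  exists_of_eq {x₁ x₂} h := by
    obtain ⟨r, hr, hrN⟩ := exists_mem_onePlus_smul_eq_zero_of_fg hfg hN
    refine ⟨⟨r, hr⟩, sub_eq_zero.1 ?_⟩
    rw [← smul_sub]
    exact hrN _ ((Submodule.Quotient.eq N).1 h)
end

/-- Let `Λ` be a commutative Noetherian ring, `I` an ideal, and `M` a
finitely generated `Λ`-module with `cl(Ann_Λ M) ⊇ Iⁿ`, where `cl(𝔞) = ⋂ₘ (𝔞 + Iᵐ)`
is the `I`-adic closure. Then the `I`-adic completion `M̂ = lim← M/MIⁱ` and the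
localization `M^ℓ = M[(1+I)⁻¹]` are both isomorphic to `M/MIⁿ`. -/
theorem stmt5 (Λ : Type) [CommRing Λ] [IsNoetherianRing Λ] (I : Ideal Λ)
    (M : Type) [AddCommGroup M] [Module Λ M] [Module.Finite Λ M] (n : ℕ)
    (hcl : (I ^ n : Ideal Λ) ≤ ⨅ m : ℕ, ((⊤ : Submodule Λ M).annihilator ⊔ I ^ m)) :
    Nonempty (AdicCompletion I M ≃ₗ[Λ] M ⧸ (I ^ n • (⊤ : Submodule Λ M))) ∧
    Nonempty (LocalizedModule (onePlus I) M ≃ₗ[Λ] M ⧸ (I ^ n • (⊤ : Submodule Λ M))) := by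
  have hstab (m : ℕ) (hm : n ≤ m) : I ^ m • (⊤ : Submodule Λ M) = I ^ n • ⊤ :=
    Ideal.pow_smul_top_eq_of_pow_le_adicClosure hcl hm
  have hle : I ^ n • (⊤ : Submodule Λ M) ≤ I • I ^ n • ⊤ := by
    rw [← Submodule.mul_smul, ← pow_succ', hstab (n + 1) n.le_succ]
  have := isLocalizedModule_onePlus_mkQ (IsNoetherian.noetherian _) hle le_rfl
  exact ⟨⟨.ofBijective _ (AdicCompletion.eval_bijective_of_pow_smul_top_eq hstab)⟩,
    ⟨IsLocalizedModule.iso (onePlus I) (I ^ n • ⊤ : Submodule Λ M).mkQ⟩⟩
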